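/- Let B ∈ M_n(ℝ) be skew-symmetrizable. Then for any reduced sequence w, the first duality G^w B^w = B^∅ C^w holds. -/

import Mathlib

open Matrix

noncomputable section

abbrev Mat3 := Matrix (Fin 3) (Fin 3) ℝ

def pPart {n : ℕ} (A : Matrix (Fin n) (Fin n) ℝ) : Matrix (Fin n) (Fin n) ℝ :=
  Matrix.of fun i j => max (A i j) 0

def Jmat {n : ℕ} (k : Fin n) : Matrix (Fin n) (Fin n) ℝ :=
  Matrix.diagonal fun i => if i = k then -1 else 1

/-- `A^{•k}`: keep only column `k`. -/
def colSel {n : ℕ} (k : Fin n) (A : Matrix (Fin n) (Fin n) ℝ) : Matrix (Fin n) (Fin n) ℝ :=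
  Matrix.of fun i j => if j = k then A i j else 0

/-- `A^{k•}`: keep only row `k`. -/
def rowSel {n : ℕ} (k : Fin n) (A : Matrix (Fin n) (Fin n) ℝ) : Matrix (Fin n) (Fin n) ℝ :=
  Matrix.of fun i j => if i = k then A i j else 0

/-- Matrix mutation in direction `k`. -/
def mutB {n : ℕ} (k : Fin n) (B : Matrix (Fin n) (Fin n) ℝ) : Matrix (Fin n) (Fin n) ℝ :=
  (Jmat k + colSel k (pPart (-B))) * B * (Jmat k + rowSel k (pPart B))

/-- One step of the simultaneous `(B, C, G)` recursion, mutating at direction `k`. -/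
def CGstep {n : ℕ} (B0 : Matrix (Fin n) (Fin n) ℝ)
    (p : Matrix (Fin n) (Fin n) ℝ × Matrix (Fin n) (Fin n) ℝ × Matrix (Fin n) (Fin n) ℝ)
    (k : Fin n) :
    Matrix (Fin n) (Fin n) ℝ × Matrix (Fin n) (Fin n) ℝ × Matrix (Fin n) (Fin n) ℝ :=
  (mutB k p.1,
   p.2.1 * Jmat k + p.2.1 * rowSel k (pPart p.1) + colSel k (pPart (-p.2.1)) * p.1,
   p.2.2 * Jmat k + p.2.2 * colSel k (pPart (-p.1)) - B0 * colSel k (pPart (-p.2.1)))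

def CGmat {n : ℕ} (B : Matrix (Fin n) (Fin n) ℝ) (w : List (Fin n)) :
    Matrix (Fin n) (Fin n) ℝ × Matrix (Fin n) (Fin n) ℝ × Matrix (Fin n) (Fin n) ℝ :=
  w.foldl (CGstep B) (B, 1, 1)

/-- The exchange matrix `B^w`. -/
def Bmat {n : ℕ} (B : Matrix (Fin n) (Fin n) ℝ) (w : List (Fin n)) : Matrix (Fin n) (Fin n) ℝ :=
  (CGmat B w).1

/-- The `C`-matrix `C^w`. -/
def Cmat {n : ℕ} (B : Matrix (Fin n) (Fin n) ℝ) (w : List (Fin n)) : Matrix (Fin n) (Fin n) ℝ :=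
  (CGmat B w).2.1

/-- The `G`-matrix `G^w`. -/
def Gmat {n : ℕ} (B : Matrix (Fin n) (Fin n) ℝ) (w : List (Fin n)) : Matrix (Fin n) (Fin n) ℝ :=
  (CGmat B w).2.2

/-- A sequence is reduced if consecutive entries differ. -/
def ReducedSeq {n : ℕ} (w : List (Fin n)) : Prop := w.Chain' (· ≠ ·)

def SkewSymmetrizable {n : ℕ} (B : Matrix (Fin n) (Fin n) ℝ) : Prop :=
  ∃ d : Fin n → ℝ, (∀ i, 0 < d i) ∧ (Matrix.diagonal d * B)ᵀ = -(Matrix.diagonal d * B)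

def cyclicPattern : Mat3 := !![0,-1,1; 1,0,-1; -1,1,0]

/-- A rank-3 exchange matrix is cyclic if its sign pattern is `± cyclicPattern`. -/
def IsCyclic3 (B : Mat3) : Prop :=
  (∀ i j, Real.sign (B i j) = cyclicPattern i j) ∨
  (∀ i j, Real.sign (B i j) = - cyclicPattern i j)

/-- `B` is cluster-cyclic if every iterated mutation along a reduced sequence is cyclic. -/
def ClusterCyclic (B : Mat3) : Prop :=
  ∀ w : List (Fin 3), ReducedSeq w → IsCyclic3 (Bmat B w)

/-- `ε` is a family of tropical signs for the (sign-coherent) `C`-pattern of `B`. -/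
def IsTropSigns (B : Mat3) (ε : List (Fin 3) → Fin 3 → ℝ) : Prop :=
  ∀ w : List (Fin 3), ReducedSeq w → ∀ i : Fin 3,
    (ε w i = 1 ∨ ε w i = -1) ∧ ∀ j, 0 ≤ ε w i * Cmat B w j i

/-!
Write the mutation as `μ_k B = E B F` with `E = J_k + [-B]_+^{•k}` and `F = J_k + [B]_+^{k•}`.
For a skew-symmetrizer `D` one has `Eᵀ D = D F`, so every `B^w` is skew-symmetrizable and in
particular has zero diagonal. When `B_kk = 0`, `E` is an involution whose `k`-th row is `-e_k`,
and `B F` has the same `k`-th row as `B`; with these three facts the recursions turn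
`G^w B^w = B C^w` into `G^{w[k]} B^{w[k]} = B C^{w[k]}`.
-/

section Selectors

variable {n : ℕ} (k : Fin n) (A M : Matrix (Fin n) (Fin n) ℝ)

theorem colSel_mul : colSel k A * M = A * rowSel k M := by
  ext i j
  simp [colSel, rowSel, Matrix.mul_apply]

theorem rowSel_mul : rowSel k (A * M) = rowSel k A * M := by
  ext i j
  by_cases hi : i = k <;> simp [rowSel, Matrix.mul_apply, hi]

theorem rowSel_one_mul : rowSel k 1 * M = rowSel k M := by
  rw [← rowSel_mul, one_mul]

theorem Jmat_mul_self : Jmat k * Jmat k = 1 := by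
  rw [Jmat, diagonal_mul_diagonal, ← diagonal_one]
  congr 1
  ext i
  split_ifs <;> norm_num

end Selectors

section ZeroDiagonal

variable {n : ℕ} {k : Fin n} {P R B : Matrix (Fin n) (Fin n) ℝ}

theorem rowSel_Jmat_add_colSel (hP : P k k = 0) :
    rowSel k (Jmat k + colSel k P) = -rowSel k 1 := by
  ext i j
  by_cases hi : i = k <;> by_cases hj : j = k <;>
    simp_all [rowSel, colSel, Jmat, diagonal_apply, one_apply, eq_comm]

theorem Jmat_add_colSel_mul_self (hP : P k k = 0) :
    (Jmat k + colSel k P) * (Jmat k + colSel k P) = 1 := by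
  have hJ : Jmat k * colSel k P = colSel k P := by
    ext i j
    by_cases hi : i = k <;> by_cases hj : j = k <;> simp_all [colSel, Jmat, diagonal_mul]
  have hJ' : colSel k P * Jmat k = -colSel k P := by
    ext i j
    by_cases hj : j = k <;> simp [colSel, Jmat, mul_diagonal, hj]
  have hsq : colSel k P * colSel k P = 0 := by
    ext i j
    by_cases hj : j = k <;> simp_all [colSel, Matrix.mul_apply]
  rw [add_mul, mul_add, mul_add, Jmat_mul_self, hJ, hJ', hsq]
  abel

theorem rowSel_mul_Jmat_add_rowSel (hB : B k k = 0) :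
    rowSel k (B * (Jmat k + rowSel k R)) = rowSel k B := by
  rw [mul_add, ← colSel_mul]
  ext i j
  simp only [rowSel, Jmat, of_apply, Matrix.add_apply, mul_diagonal]
  by_cases hi : i = k <;> by_cases hj : j = k <;> simp_all [colSel, Matrix.mul_apply]

theorem mul_mutB_eq_of_mul_eq {B₀ G C X : Matrix (Fin n) (Fin n) ℝ} (hB : B k k = 0)
    (h : G * B = B₀ * C) :
    (G * Jmat k + G * colSel k (pPart (-B)) - B₀ * colSel k X) * mutB k B
      = B₀ * (C * Jmat k + C * rowSel k (pPart B) + colSel k X * B) := by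
  set E := Jmat k + colSel k (pPart (-B))
  set F := Jmat k + rowSel k (pPart B)
  have hE : E * E = 1 := Jmat_add_colSel_mul_self (by simp [pPart, hB])
  have hrowE : rowSel k (E * (B * F)) = -rowSel k B := by
    rw [rowSel_mul, rowSel_Jmat_add_colSel (by simp [pPart, hB]), neg_mul, rowSel_one_mul,
      rowSel_mul_Jmat_add_rowSel hB]
  calc (G * Jmat k + G * colSel k (pPart (-B)) - B₀ * colSel k X) * (E * B * F)
      = G * (E * E) * B * F - B₀ * (X * rowSel k (E * (B * F))) := by
        rw [← mul_add, sub_mul, mul_assoc B₀, colSel_mul]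
        simp only [mul_assoc]
        rfl
    _ = B₀ * (C * F + X * rowSel k B) := by
        rw [hE, mul_one, h, hrowE, mul_neg, mul_neg, sub_neg_eq_add, mul_assoc, ← mul_add]
    _ = B₀ * (C * Jmat k + C * rowSel k (pPart B) + colSel k X * B) := by
        rw [colSel_mul, ← mul_add]

end ZeroDiagonal

section Skew

variable {n : ℕ} {d : Fin n → ℝ} {B : Matrix (Fin n) (Fin n) ℝ}

theorem mul_apply_eq_neg_of_skew (hB : (diagonal d * B)ᵀ = -(diagonal d * B)) (i j : Fin n) :
    d j * B j i = -(d i * B i j) := by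
  simpa [diagonal_mul] using congrFun (congrFun hB i) j

theorem apply_self_eq_zero_of_skew (hd : ∀ i, 0 < d i)
    (hB : (diagonal d * B)ᵀ = -(diagonal d * B)) (k : Fin n) : B k k = 0 := by
  have := mul_apply_eq_neg_of_skew hB k k
  exact (mul_eq_zero.1 (by linarith : d k * B k k = 0)).resolve_left (hd k).ne'

theorem transpose_Jmat_add_colSel_mul_diagonal (hd : ∀ i, 0 < d i)
    (hB : (diagonal d * B)ᵀ = -(diagonal d * B)) (k : Fin n) :
    (Jmat k + colSel k (pPart (-B)))ᵀ * diagonal d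
      = diagonal d * (Jmat k + rowSel k (pPart B)) := by
  have hkk := apply_self_eq_zero_of_skew hd hB k
  ext i j
  simp only [mul_diagonal, diagonal_mul, transpose_apply, Matrix.add_apply, Jmat, diagonal_apply,
    colSel, rowSel, pPart, of_apply, Matrix.neg_apply]
  by_cases hi : i = k
  · subst hi
    by_cases hj : j = i
    · subst hj; simp [hkk]
    · simp only [hj, Ne.symm hj, if_false, if_true, zero_add]
      rw [max_mul_of_nonneg _ _ (hd j).le, mul_max_of_nonneg _ _ (hd i).le, zero_mul, mul_zero,
        neg_mul, mul_comm, mul_apply_eq_neg_of_skew hB, neg_neg]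
  · by_cases hj : j = i
    · subst hj; simp [hi]
    · simp [hj, Ne.symm hj, hi]

theorem transpose_diagonal_mul_mutB (hd : ∀ i, 0 < d i)
    (hB : (diagonal d * B)ᵀ = -(diagonal d * B)) (k : Fin n) :
    (diagonal d * mutB k B)ᵀ = -(diagonal d * mutB k B) := by
  set E := Jmat k + colSel k (pPart (-B))
  set F := Jmat k + rowSel k (pPart B)
  have hEF : Eᵀ * diagonal d = diagonal d * F := transpose_Jmat_add_colSel_mul_diagonal hd hB k
  have hFE : Fᵀ * diagonal d = diagonal d * E := by
    simpa using (congrArg transpose hEF).symm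
  have hBD : Bᵀ * diagonal d = -(diagonal d * B) := by
    rw [← hB, transpose_mul, diagonal_transpose]
  calc (diagonal d * (E * B * F))ᵀ = Fᵀ * (Bᵀ * (Eᵀ * diagonal d)) := by
        simp only [transpose_mul, diagonal_transpose, mul_assoc]
    _ = -(Fᵀ * diagonal d * (B * F)) := by
        rw [hEF, ← mul_assoc Bᵀ, hBD]
        simp only [neg_mul, mul_neg, mul_assoc]
    _ = -(diagonal d * (E * B * F)) := by
        rw [hFE]
        simp only [mul_assoc]

theorem SkewSymmetrizable.apply_self_eq_zero (h : SkewSymmetrizable B) (k : Fin n) :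
    B k k = 0 :=
  let ⟨_, hd, hB⟩ := h
  apply_self_eq_zero_of_skew hd hB k

theorem SkewSymmetrizable.mutB (h : SkewSymmetrizable B) (k : Fin n) :
    SkewSymmetrizable (mutB k B) :=
  let ⟨d, hd, hB⟩ := h
  ⟨d, hd, transpose_diagonal_mul_mutB hd hB k⟩

end Skew

section Recursion

variable {n : ℕ} (B : Matrix (Fin n) (Fin n) ℝ) (w : List (Fin n)) (k : Fin n)

theorem CGmat_append_singleton : CGmat B (w ++ [k]) = CGstep B (CGmat B w) k := by
  simp [CGmat]

theorem Bmat_append_singleton : Bmat B (w ++ [k]) = mutB k (Bmat B w) := by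
  simp [Bmat, CGmat_append_singleton, CGstep]

theorem Cmat_append_singleton :
    Cmat B (w ++ [k]) = Cmat B w * Jmat k + Cmat B w * rowSel k (pPart (Bmat B w))
      + colSel k (pPart (-Cmat B w)) * Bmat B w := by
  simp [Cmat, Bmat, CGmat_append_singleton, CGstep]

theorem Gmat_append_singleton :
    Gmat B (w ++ [k]) = Gmat B w * Jmat k + Gmat B w * colSel k (pPart (-Bmat B w))
      - B * colSel k (pPart (-Cmat B w)) := by
  simp [Gmat, Bmat, Cmat, CGmat_append_singleton, CGstep]

end Recursion

theorem SkewSymmetrizable.Bmat {n : ℕ} {B : Matrix (Fin n) (Fin n) ℝ} (h : SkewSymmetrizable B)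
    (w : List (Fin n)) : SkewSymmetrizable (Bmat B w) := by
  induction w using List.reverseRecOn with
  | nil => exact h
  | append_singleton w k ih => rw [Bmat_append_singleton]; exact ih.mutB k

theorem first_duality_general {n : ℕ} (B : Matrix (Fin n) (Fin n) ℝ)
    (hskew : SkewSymmetrizable B) (w : List (Fin n)) :
    Gmat B w * Bmat B w = B * Cmat B w := by
  induction w using List.reverseRecOn with
  | nil => simp [Gmat, Bmat, Cmat, CGmat]
  | append_singleton w k ih =>
    rw [Gmat_append_singleton, Bmat_append_singleton, Cmat_append_singleton]
    exact mul_mutB_eq_of_mul_eq ((hskew.Bmat w).apply_self_eq_zero k) ih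

theorem first_duality {n : ℕ} (B : Matrix (Fin n) (Fin n) ℝ)
    (hskew : SkewSymmetrizable B) (w : List (Fin n)) (hw : ReducedSeq w) :
    Gmat B w * Bmat B w = B * Cmat B w :=
  first_duality_general B hskew w
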